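/- arXiv:2502.15967 — 5 statements merged into one kernel-verified Lean document; each statement's English description precedes it below -/
import Mathlib

section
/- Let G be a finite group that is not a p-group, A ≤ Aut(G), and suppose there exists an element x ∈ G of prime order p such that C_G(x) is a p-group. Then Δ(G,A) is disconnected. -/
open Subgroup

/-- The A-orbit of x under a subgroup A of Aut(G). -/
def aorb {G : Type*} [Group G] (A : Subgroup (MulAut G)) (x : G) : Set G :=
  {y | ∃ a ∈ A, a x = y}

/-- The vertex set of the automorphic cyclic graph: A-orbits of nontrivial elements. -/
def DeltaVerts (G : Type*) [Group G] (A : Subgroup (MulAut G)) :=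
  {S : Set G // ∃ x : G, x ≠ 1 ∧ S = aorb A x}

/-- The automorphic cyclic graph Δ(G,A). -/
def Delta (G : Type*) [Group G] (A : Subgroup (MulAut G)) :
    SimpleGraph (DeltaVerts G A) where
  Adj S T := S ≠ T ∧ ∃ x ∈ S.1, ∃ y ∈ T.1,
    IsCyclic (Subgroup.closure {x, y} : Subgroup G)
  symm := ⟨by
    rintro S T ⟨hne, x, hx, y, hy, hc⟩
    exact ⟨hne.symm, y, hy, x, hx, by rwa [Set.pair_comm]⟩⟩
  loopless := ⟨fun S h => h.1 rfl⟩

/-- The vertex corresponding to the A-orbit of a nontrivial element x. -/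
def vtx {G : Type*} [Group G] (A : Subgroup (MulAut G)) (x : G) (hx : x ≠ 1) :
    DeltaVerts G A :=
  ⟨aorb A x, x, hx, rfl⟩

/-!
Call `g` *anchored* if some power `u` of `g` has order `p` and a `p`-group as centralizer; `x` is
anchored, and the property is invariant under automorphisms. If `g` is anchored with witness `u`
and `⟨g, y⟩` is cyclic with `y ≠ 1`, then `y` commutes with `u`, so `y` is a `p`-element; in the
cyclic group `⟨g, y⟩` the element `u` of order `p ∣ |y|` is then a power of `y`, so `y` is anchored.
Hence every vertex in the component of `x^A` consists of anchored elements. But an anchored element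
lies in the centralizer of its witness, so it is a `p`-element, and a non-`p`-group has elements
that are not.
-/

theorem SimpleGraph.Reachable.of_adj_imp {V : Type*} {Γ : SimpleGraph V} {P : V → Prop}
    {u v : V} (h : Γ.Reachable u v) (hP : ∀ ⦃a b⦄, Γ.Adj a b → P a → P b) (hu : P u) : P v := by
  replace h := (Γ.reachable_iff_reflTransGen u v).1 h
  induction h with
  | refl => exact hu
  | tail _ hab ih => exact hP hab ih

theorem IsCyclic.mem_zpowers_of_orderOf_dvd {H : Type*} [Group H] [Finite H] [IsCyclic H] {u v : H}
    (h : orderOf u ∣ orderOf v) : u ∈ zpowers v := by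
  classical
  have : Fintype H := Fintype.ofFinite H
  set n := orderOf u
  set w := v ^ (orderOf v / n)
  have hw : orderOf w = n := orderOf_pow_orderOf_div (orderOf_pos v).ne' h
  -- `zpowers w` has `n` elements, all roots of `a ^ n = 1`, which has at most `n` roots in `H`
  have hroots : (zpowers w : Set H).toFinset = ({a | a ^ n = 1} : Finset H) := by
    refine Finset.eq_of_subset_of_card_le (fun a ha => ?_) ?_
    · rw [Set.mem_toFinset] at ha
      simpa using orderOf_dvd_iff_pow_eq_one.1 (hw ▸ orderOf_dvd_of_mem_zpowers ha)
    · rw [← Nat.card_eq_card_toFinset]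
      exact (IsCyclic.card_pow_eq_one_le (orderOf_pos u)).trans_eq (hw ▸ Nat.card_zpowers w).symm
  have huw : u ∈ ({a | a ^ n = 1} : Finset H) := by simp [n, pow_orderOf_eq_one]
  rw [← hroots, Set.mem_toFinset] at huw
  exact zpowers_le.2 (pow_mem (mem_zpowers v) _) huw

theorem Subgroup.mem_zpowers_of_orderOf_dvd {G : Type*} [Group G] {K : Subgroup G} [Finite K]
    [IsCyclic K] {u v : G} (hu : u ∈ K) (hv : v ∈ K) (h : orderOf u ∣ orderOf v) :
    u ∈ zpowers v := by
  have := IsCyclic.mem_zpowers_of_orderOf_dvd (u := (⟨u, hu⟩ : K)) (v := ⟨v, hv⟩)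
    (by simpa only [orderOf_mk] using h)
  have := mem_map_of_mem K.subtype this
  rwa [MonoidHom.map_zpowers] at this

section

variable {G : Type*} [Group G] {p : ℕ}

theorem IsPGroup.exists_pow_eq_one_of_commute {u y : G} (hC : IsPGroup p (centralizer {u}))
    (h : Commute u y) : ∃ n : ℕ, y ^ p ^ n = 1 := by
  obtain ⟨n, hn⟩ := hC ⟨y, mem_centralizer_singleton_iff.2 h.eq.symm⟩
  exact ⟨n, by simpa using congrArg Subtype.val hn⟩

theorem IsPGroup.centralizer_map {u : G} (hC : IsPGroup p (centralizer {u})) (a : MulAut G) :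
    IsPGroup p (centralizer {a u}) := by
  refine (hC.map a.toMonoidHom).to_le fun z hz => ⟨a⁻¹ z, ?_, by simp⟩
  rw [SetLike.mem_coe, mem_centralizer_singleton_iff] at *
  simpa using congrArg a.symm hz

def IsAnchored (p : ℕ) (g : G) : Prop :=
  ∃ u ∈ zpowers g, orderOf u = p ∧ IsPGroup p (centralizer {u})

namespace IsAnchored

theorem map {g : G} (h : IsAnchored p g) (a : MulAut G) : IsAnchored p (a g) := by
  obtain ⟨u, hu, hup, hC⟩ := h
  refine ⟨a u, ?_, by rw [MulEquiv.orderOf_eq, hup], hC.centralizer_map a⟩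
  have := mem_map_of_mem a.toMonoidHom hu
  rwa [MonoidHom.map_zpowers] at this

theorem exists_pow_eq_one {g : G} (h : IsAnchored p g) : ∃ n : ℕ, g ^ p ^ n = 1 := by
  obtain ⟨u, hu, -, hC⟩ := h
  obtain ⟨k, rfl⟩ := mem_zpowers_iff.1 hu
  exact hC.exists_pow_eq_one_of_commute (Commute.zpow_left (Commute.refl g) k)

theorem of_isCyclic_closure [Finite G] (hp : p.Prime) {g y : G} (hg : IsAnchored p g)
    (hy : y ≠ 1) (hK : IsCyclic (closure {g, y})) : IsAnchored p y := by
  have : IsCyclic (closure {g, y}) := hK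
  obtain ⟨u, hug, hup, hC⟩ := hg
  have huK : u ∈ closure {g, y} := zpowers_le.2 (subset_closure (by simp)) hug
  have hyK : y ∈ closure {g, y} := subset_closure (by simp)
  obtain ⟨n, hn⟩ := hC.exists_pow_eq_one_of_commute (setLike_mul_comm huK hyK)
  obtain ⟨k, -, hk⟩ := (Nat.dvd_prime_pow hp).1 (orderOf_dvd_of_pow_eq_one hn)
  have hk0 : k ≠ 0 := by
    rintro rfl
    exact hy (orderOf_eq_one_iff.1 (by rwa [pow_zero] at hk))
  have hpy : p ∣ orderOf y := hk ▸ dvd_pow_self p hk0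
  exact ⟨u, mem_zpowers_of_orderOf_dvd huK hyK (hup ▸ hpy), hup, hC⟩

end IsAnchored

namespace DeltaVerts

variable {A : Subgroup (MulAut G)}

theorem ne_one_of_mem (S : DeltaVerts G A) {z : G} (hz : z ∈ S.1) : z ≠ 1 := by
  obtain ⟨x, hx, hS⟩ := S.2
  rw [hS] at hz
  obtain ⟨a, -, rfl⟩ := hz
  exact (map_ne_one_iff a a.injective).2 hx

theorem forall_mem_of_mem {P : G → Prop} (hP : ∀ (a : MulAut G) g, P g → P (a g))
    (S : DeltaVerts G A) {y : G} (hy : y ∈ S.1) (h : P y) : ∀ z ∈ S.1, P z := by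
  obtain ⟨x, -, hS⟩ := S.2
  rw [hS] at hy ⊢
  obtain ⟨a, -, rfl⟩ := hy
  rintro z ⟨b, -, rfl⟩
  simpa using hP (b * a⁻¹) _ h

end DeltaVerts

theorem Delta.forall_mem_of_reachable {A : Subgroup (MulAut G)} {P : G → Prop}
    (hP : ∀ (a : MulAut G) g, P g → P (a g))
    (hstep : ∀ g y : G, y ≠ 1 → IsCyclic (closure {g, y}) → P g → P y)
    {S T : DeltaVerts G A} (h : (Delta G A).Reachable S T) (hS : ∀ z ∈ S.1, P z) :
    ∀ z ∈ T.1, P z :=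
  h.of_adj_imp (P := fun S : DeltaVerts G A => ∀ z ∈ S.1, P z)
    (fun _ T ⟨_, g, hg, y, hy, hK⟩ hS =>
      T.forall_mem_of_mem hP hy (hstep g y (T.ne_one_of_mem hy) hK (hS g hg)))
    hS

end

theorem stmt2 {G : Type*} [Group G] [Finite G] (A : Subgroup (MulAut G))
    (p : ℕ) (hp : p.Prime) (hG : ¬ IsPGroup p G)
    (x : G) (hxo : orderOf x = p) (hC : IsPGroup p (Subgroup.centralizer {x})) :
    ¬ (Delta G A).Connected := by
  intro hconn
  have hx1 : x ≠ 1 := fun h => hp.ne_one (by rw [← hxo, h, orderOf_one])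
  obtain ⟨g, hg⟩ : ∃ g : G, ¬ ∃ n : ℕ, g ^ p ^ n = 1 := not_forall.1 hG
  have hg1 : g ≠ 1 := fun h => hg ⟨0, by simp [h]⟩
  have hP : ∀ (a : MulAut G) z, IsAnchored p z → IsAnchored p (a z) := fun a _ h => h.map a
  have hanchored : ∀ z ∈ (vtx A g hg1).1, IsAnchored p z :=
    Delta.forall_mem_of_reachable hP (fun _ _ hy hK h => h.of_isCyclic_closure hp hy hK)
      (hconn.preconnected (vtx A x hx1) (vtx A g hg1))
      ((vtx A x hx1).forall_mem_of_mem hP ⟨1, one_mem A, rfl⟩ ⟨x, mem_zpowers x, hxo, hC⟩)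
  exact hg (hanchored g ⟨1, one_mem A, rfl⟩).exists_pow_eq_one
end

section
/- Let G be a finite p-group, A ≤ Aut(G). If x and y are nontrivial elements of G whose orbits x^A and y^A lie in the same connected component of Δ(G,A), then the unique subgroup of order p contained in ⟨x⟩ is A-conjugate to the unique subgroup of order p contained in ⟨y⟩. Consequently, the connected components of Δ(G,A) are in one-to-one correspondence with the A-orbits on the set of subgroups of G of order p. -/
open Subgroup

/-!
A cyclic group contains at most one subgroup of each order, so for `x ≠ 1` the subgroups of
order `p` of the groups `⟨x'⟩`, `x' ∈ x^A`, form a single `A`-orbit. Adjacent vertices give the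
same orbit, because for `⟨x', y'⟩` cyclic the order-`p` subgroups of `⟨x'⟩` and `⟨y'⟩`
coincide. Conversely, if `x^A` and `y^A` give the same orbit, then some `⟨x'⟩` and `⟨y'⟩`
share a subgroup `⟨z⟩` of order `p`, and `z^A` is equal or adjacent to each of the two
vertices. Hence this orbit is a complete invariant of the connected components.
-/

namespace IsCyclic

variable {α : Type*} [Group α] [Finite α] [IsCyclic α]

theorem coe_subgroup_eq_setOf_pow_natCard_eq_one (H : Subgroup α) :
    (H : Set α) = {a | a ^ Nat.card H = 1} := by
  classical
  have := Fintype.ofFinite α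
  refine Set.eq_of_subset_of_ncard_le (fun a ha ↦ ?_) ?_ (Set.toFinite _)
  · exact congrArg Subtype.val (pow_card_eq_one' (G := H) (x := ⟨a, ha⟩))
  · rw [Set.ncard_eq_toFinset_card', Set.toFinset_ofPred, ← Nat.card_coe_set_eq,
      SetLike.coe_sort_coe]
    exact IsCyclic.card_pow_eq_one_le Nat.card_pos

theorem subgroup_eq_of_natCard_eq {H K : Subgroup α} (h : Nat.card H = Nat.card K) : H = K :=
  SetLike.coe_injective <| by
    rw [coe_subgroup_eq_setOf_pow_natCard_eq_one, coe_subgroup_eq_setOf_pow_natCard_eq_one, h]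

end IsCyclic

namespace Subgroup

variable {G : Type*} [Group G]

theorem eq_of_le_of_natCard_eq {C P Q : Subgroup G} [Finite C] [IsCyclic C]
    (hP : P ≤ C) (hQ : Q ≤ C) (h : Nat.card P = Nat.card Q) : P = Q := by
  have hPQ : P.subgroupOf C = Q.subgroupOf C := IsCyclic.subgroup_eq_of_natCard_eq <| by
    rwa [Nat.card_congr (subgroupOfEquivOfLe hP).toEquiv,
      Nat.card_congr (subgroupOfEquivOfLe hQ).toEquiv]
  rwa [subgroupOf_inj, inf_of_le_left hP, inf_of_le_left hQ] at hPQ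

theorem exists_le_zpowers_natCard_eq {x : G} (hx : IsOfFinOrder x) {n : ℕ} (hn : n ∣ orderOf x) :
    ∃ P ≤ zpowers x, Nat.card P = n :=
  ⟨zpowers (x ^ (orderOf x / n)), zpowers_le_of_mem (pow_mem (mem_zpowers x) _),
    by rw [Nat.card_zpowers, orderOf_pow_orderOf_div hx.orderOf_pos.ne' hn]⟩

end Subgroup

theorem IsPGroup.exists_le_zpowers_natCard_eq {G : Type*} [Group G] {p : ℕ} [Fact p.Prime]
    (hG : IsPGroup p G) {x : G} (hx : x ≠ 1) : ∃ P ≤ zpowers x, Nat.card P = p :=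
  Subgroup.exists_le_zpowers_natCard_eq (hG.isOfFinOrder (Fact.out : p.Prime).ne_zero x)
    (hG.dvd_orderOf hx)

noncomputable def SimpleGraph.connectedComponentEquivRange {V β : Type*} {Γ : SimpleGraph V}
    (f : V → β) (hf : ∀ u v, f u = f v ↔ Γ.Reachable u v) : Γ.ConnectedComponent ≃ Set.range f :=
  (Quot.congrRight fun u v ↦ (hf u v).symm).trans (Setoid.quotientKerEquivRange f)

section Delta

variable {G : Type*} [Group G] {A : Subgroup (MulAut G)}

theorem aorb_eq_orbit (A : Subgroup (MulAut G)) (x : G) : aorb A x = MulAction.orbit A x := by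
  ext y
  simp [aorb, MulAction.mem_orbit_iff]

theorem mem_aorb_self (A : Subgroup (MulAut G)) (x : G) : x ∈ aorb A x :=
  aorb_eq_orbit A x ▸ MulAction.mem_orbit_self x

theorem DeltaVerts.exists_eq_vtx (S : DeltaVerts G A) : ∃ (x : G) (hx : x ≠ 1), S = vtx A x hx :=
  let ⟨x, hx, hS⟩ := S.2
  ⟨x, hx, Subtype.ext hS⟩

theorem DeltaVerts.exists_eq_vtx_of_mem {S : DeltaVerts G A} {x : G} (hx : x ∈ S.1) :
    ∃ hx1 : x ≠ 1, S = vtx A x hx1 := by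
  obtain ⟨x₀, hx₀, rfl⟩ := S.exists_eq_vtx
  change x ∈ aorb A x₀ at hx
  refine ⟨?_, Subtype.ext ?_⟩
  · obtain ⟨a, -, rfl⟩ := hx
    exact (MulEquiv.map_ne_one_iff a).mpr hx₀
  · change aorb A x₀ = aorb A x
    rw [aorb_eq_orbit] at hx ⊢
    rw [aorb_eq_orbit]
    exact (MulAction.orbit_eq_iff.mpr hx).symm

theorem reachable_vtx_of_mem_zpowers {x w : G} (hx : x ≠ 1) (hw : w ≠ 1) (h : w ∈ zpowers x) :
    (Delta G A).Reachable (vtx A x hx) (vtx A w hw) := by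
  by_cases he : vtx A x hx = vtx A w hw
  · rw [he]
  have hxw : closure {x, w} = zpowers x := le_antisymm
    (closure_le _ |>.mpr (Set.insert_subset (mem_zpowers x) (Set.singleton_subset_iff.mpr h)))
    (zpowers_le.mpr (subset_closure (by simp)))
  refine SimpleGraph.Adj.reachable ⟨he, x, mem_aorb_self A x, w, mem_aorb_self A w, ?_⟩
  rw [hxw]
  infer_instance

/-- When `S = x^A`, this is the `A`-orbit of the subgroup of order `n` of `⟨x⟩`, described
without choosing `x`. -/
def subgroupsOfCardInZpowers (n : ℕ) (S : Set G) : Set (Subgroup G) :=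
  {T | Nat.card T = n ∧ ∃ x ∈ S, T ≤ zpowers x}

variable {p : ℕ} [Fact p.Prime]

theorem reachable_of_subgroupsOfCardInZpowers_eq (hG : IsPGroup p G) {S T : DeltaVerts G A}
    (h : subgroupsOfCardInZpowers p S.1 = subgroupsOfCardInZpowers p T.1) :
    (Delta G A).Reachable S T := by
  obtain ⟨x, hx, rfl⟩ := S.exists_eq_vtx
  obtain ⟨P, hP, hPc⟩ := hG.exists_le_zpowers_natCard_eq hx
  obtain ⟨-, y, hy, hPy⟩ : P ∈ subgroupsOfCardInZpowers p T.1 :=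
    h ▸ ⟨hPc, x, mem_aorb_self A x, hP⟩
  obtain ⟨hy1, rfl⟩ := DeltaVerts.exists_eq_vtx_of_mem hy
  obtain ⟨z, hzP, hz1⟩ := P.bot_or_exists_ne_one.resolve_left fun hbot ↦
    (Fact.out : p.Prime).ne_one (by rw [← hPc, hbot, card_bot])
  exact (reachable_vtx_of_mem_zpowers hx hz1 (hP hzP)).trans
    (reachable_vtx_of_mem_zpowers hy1 hz1 (hPy hzP)).symm

variable [Finite G]

theorem subgroupsOfCardInZpowers_aorb (A : Subgroup (MulAut G)) {x : G} {P : Subgroup G}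
    (hP : P ≤ zpowers x) :
    subgroupsOfCardInZpowers (Nat.card P) (aorb A x) = {T | ∃ a ∈ A, P.map a.toMonoidHom = T} := by
  have hmap (a : MulAut G) : P.map a.toMonoidHom ≤ zpowers (a x) :=
    (map_mono hP).trans (MonoidHom.map_zpowers _ x).le
  have hcard (a : MulAut G) : Nat.card (P.map a.toMonoidHom) = Nat.card P :=
    card_map_of_injective a.injective
  ext T
  constructor
  · rintro ⟨hT, _, ⟨a, ha, rfl⟩, hTle⟩
    exact ⟨a, ha, eq_of_le_of_natCard_eq (hmap a) hTle ((hcard a).trans hT.symm)⟩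
  · rintro ⟨a, ha, rfl⟩
    exact ⟨hcard a, a x, ⟨a, ha, rfl⟩, hmap a⟩

theorem subgroupsOfCardInZpowers_eq_of_adj (hG : IsPGroup p G) {S T : DeltaVerts G A}
    (h : (Delta G A).Adj S T) :
    subgroupsOfCardInZpowers p S.1 = subgroupsOfCardInZpowers p T.1 := by
  obtain ⟨-, x, hx, y, hy, hxy⟩ := h
  obtain ⟨hx1, rfl⟩ := DeltaVerts.exists_eq_vtx_of_mem hx
  obtain ⟨hy1, rfl⟩ := DeltaVerts.exists_eq_vtx_of_mem hy
  obtain ⟨P, hP, hPc⟩ := hG.exists_le_zpowers_natCard_eq hx1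
  obtain ⟨Q, hQ, hQc⟩ := hG.exists_le_zpowers_natCard_eq hy1
  obtain rfl : P = Q := eq_of_le_of_natCard_eq (C := closure {x, y})
    (hP.trans (zpowers_le.mpr (subset_closure (by simp))))
    (hQ.trans (zpowers_le.mpr (subset_closure (by simp)))) (hPc.trans hQc.symm)
  change subgroupsOfCardInZpowers p (aorb A x) = subgroupsOfCardInZpowers p (aorb A y)
  rw [← hPc, subgroupsOfCardInZpowers_aorb A hP, subgroupsOfCardInZpowers_aorb A hQ]

theorem subgroupsOfCardInZpowers_eq_of_reachable (hG : IsPGroup p G) {S T : DeltaVerts G A}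
    (h : (Delta G A).Reachable S T) :
    subgroupsOfCardInZpowers p S.1 = subgroupsOfCardInZpowers p T.1 := by
  obtain ⟨w⟩ := h
  induction w with
  | nil => rfl
  | cons hadj _ ih => exact (subgroupsOfCardInZpowers_eq_of_adj hG hadj).trans ih

theorem range_subgroupsOfCardInZpowers (hG : IsPGroup p G) :
    Set.range (fun S : DeltaVerts G A ↦ subgroupsOfCardInZpowers p S.1) =
      {O | ∃ S : Subgroup G, Nat.card S = p ∧
        O = {T | ∃ a ∈ A, Subgroup.map a.toMonoidHom S = T}} := by
  ext O
  constructor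
  · rintro ⟨v, rfl⟩
    obtain ⟨x, hx, rfl⟩ := v.exists_eq_vtx
    obtain ⟨P, hP, hPc⟩ := hG.exists_le_zpowers_natCard_eq hx
    exact ⟨P, hPc, by rw [← hPc]; exact subgroupsOfCardInZpowers_aorb A hP⟩
  · rintro ⟨S, hSc, rfl⟩
    obtain ⟨z, hz⟩ := S.isCyclic_iff_exists_zpowers_eq_top.mp (isCyclic_of_prime_card hSc)
    have hz1 : z ≠ 1 := by
      rintro rfl
      exact (Fact.out : p.Prime).ne_one (by rw [← hSc, ← hz, zpowers_one_eq_bot, card_bot])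
    exact ⟨vtx A z hz1, by rw [← hSc]; exact subgroupsOfCardInZpowers_aorb A hz.ge⟩

end Delta

theorem stmt5 {G : Type*} [Group G] [Finite G] (A : Subgroup (MulAut G))
    (p : ℕ) (hp : p.Prime) (hG : IsPGroup p G) :
    (∀ (x y : G) (hx : x ≠ 1) (hy : y ≠ 1),
        (Delta G A).Reachable (vtx A x hx) (vtx A y hy) →
        ∀ P Q : Subgroup G, P ≤ Subgroup.zpowers x → Nat.card P = p →
          Q ≤ Subgroup.zpowers y → Nat.card Q = p →
          ∃ a ∈ A, Subgroup.map a.toMonoidHom P = Q) ∧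
      Nonempty ((Delta G A).ConnectedComponent ≃
        {O : Set (Subgroup G) | ∃ S : Subgroup G, Nat.card S = p ∧
          O = {T | ∃ a ∈ A, Subgroup.map a.toMonoidHom S = T}}) := by
  have := Fact.mk hp
  refine ⟨fun x y hx hy h P Q hP hPc hQ hQc ↦ ?_,
    ⟨(SimpleGraph.connectedComponentEquivRange _ fun _ _ ↦
        ⟨reachable_of_subgroupsOfCardInZpowers_eq hG,
          subgroupsOfCardInZpowers_eq_of_reachable hG⟩).trans
      (Equiv.setCongr (range_subgroupsOfCardInZpowers hG))⟩⟩
  have hQ' : Q ∈ subgroupsOfCardInZpowers p (vtx A y hy).1 := ⟨hQc, y, mem_aorb_self A y, hQ⟩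
  rw [← subgroupsOfCardInZpowers_eq_of_reachable hG h, ← hPc] at hQ'
  exact (subgroupsOfCardInZpowers_aorb A hP).le hQ'
end

section
/- Let G be a finite group with A ≤ Aut(G), and suppose Z(G) is a nontrivial p-group for some prime p. If for every element x of order p in G the centralizer C_G(x) is not a p-group, then Δ(G,A) is connected with diameter at most 6. -/
/-!
Take a central element `z` of order `p` (Cauchy). Commuting elements of coprime orders generate
a cyclic group, so `z` is adjacent to every element of prime order `r ≠ p`. An element of order
`p` has, by hypothesis, an element of some prime order `r ≠ p` in its centralizer, hence lies at
distance at most 2 from `z`; and every `x ≠ 1` is adjacent to a power of itself of prime order.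
So every vertex lies within distance 3 of the orbit of `z`.
-/

open Subgroup

lemma isCyclic_closure_pair_of_mem_zpowers {G : Type*} [Group G] {a b g : G}
    (ha : a ∈ zpowers g) (hb : b ∈ zpowers g) : IsCyclic (closure ({a, b} : Set G)) := by
  refine isCyclic_of_le (H' := zpowers g) (closure_le _ |>.mpr ?_)
  rintro x (rfl | rfl)
  exacts [ha, hb]

lemma Commute.mem_zpowers_mul_of_coprime {G : Type*} [Group G] {a b : G} (h : Commute a b)
    (hco : (orderOf a).Coprime (orderOf b)) : a ∈ zpowers (a * b) := by
  obtain ⟨m, hm⟩ := exists_pow_eq_self_of_coprime (x := a) hco.symm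
  have hpow : a ^ orderOf b = (a * b) ^ orderOf b := by
    rw [h.mul_pow, pow_orderOf_eq_one, mul_one]
  have hmem : (a ^ orderOf b) ^ m ∈ zpowers (a * b) :=
    hpow ▸ pow_mem (pow_mem (mem_zpowers _) _) _
  rwa [hm] at hmem

lemma Commute.isCyclic_closure_pair_of_coprime {G : Type*} [Group G] {a b : G}
    (h : Commute a b) (hco : (orderOf a).Coprime (orderOf b)) :
    IsCyclic (closure ({a, b} : Set G)) :=
  isCyclic_closure_pair_of_mem_zpowers (h.mem_zpowers_mul_of_coprime hco)
    (h.eq ▸ h.symm.mem_zpowers_mul_of_coprime hco.symm)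

lemma ne_one_of_prime_orderOf {G : Type*} [Monoid G] {x : G} (hx : (orderOf x).Prime) : x ≠ 1 :=
  orderOf_eq_one_iff.not.mp hx.ne_one

lemma exists_prime_orderOf_pow {G : Type*} [Group G] {x : G} (hx : IsOfFinOrder x)
    (h1 : x ≠ 1) : ∃ k : ℕ, (orderOf (x ^ k)).Prime := by
  have hq : (orderOf x).minFac.Prime := Nat.minFac_prime (mt orderOf_eq_one_iff.mp h1)
  refine ⟨orderOf x / (orderOf x).minFac, ?_⟩
  rwa [orderOf_pow_orderOf_div hx.orderOf_pos.ne' (Nat.minFac_dvd _)]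

lemma IsPGroup.exists_orderOf_eq_prime {H : Type*} [Group H] [Finite H] [Nontrivial H]
    {p : ℕ} [Fact p.Prime] (hH : IsPGroup p H) : ∃ g : H, orderOf g = p := by
  obtain ⟨n, hn, hcard⟩ := hH.nontrivial_iff_card.mp ‹_›
  exact exists_prime_orderOf_dvd_card' p (hcard ▸ dvd_pow_self p hn.ne')

lemma exists_prime_orderOf_ne_of_not_isPGroup {H : Type*} [Group H] [Finite H] {p : ℕ}
    (h : ¬IsPGroup p H) : ∃ y : H, (orderOf y).Prime ∧ orderOf y ≠ p := by
  contrapose! h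
  have hdvd : ∀ {r : ℕ}, r.Prime → r ∣ Nat.card H → r = p := fun {r} hr hrH => by
    have := Fact.mk hr
    obtain ⟨y, hy⟩ := exists_prime_orderOf_dvd_card' r hrH
    exact hy ▸ h y (hy ▸ hr)
  exact IsPGroup.of_card (Nat.eq_prime_pow_of_unique_prime_dvd Nat.card_pos.ne' hdvd)

lemma SimpleGraph.connected_and_dist_le_of_forall_walk_length_le {V : Type*}
    (Γ : SimpleGraph V) (c : V) (n : ℕ) (h : ∀ v, ∃ w : Γ.Walk v c, w.length ≤ n) :
    Γ.Connected ∧ ∀ u v, Γ.dist u v ≤ 2 * n := by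
  have hwalk : ∀ u v, ∃ w : Γ.Walk u v, w.length ≤ 2 * n := fun u v => by
    obtain ⟨wu, hwu⟩ := h u
    obtain ⟨wv, hwv⟩ := h v
    exact ⟨wu.append wv.reverse, by simp only [Walk.length_append, Walk.length_reverse]; omega⟩
  have : Nonempty V := ⟨c⟩
  refine ⟨⟨fun u v => (hwalk u v).elim fun w _ => w.reachable⟩, fun u v => ?_⟩
  obtain ⟨w, hw⟩ := hwalk u v
  exact (Γ.dist_le w).trans hw

namespace Delta

open SimpleGraph

variable {G : Type*} [Group G] (A : Subgroup (MulAut G))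

lemma exists_walk_length_le_one {x y : G} (hx : x ≠ 1) (hy : y ≠ 1)
    (hc : IsCyclic (closure ({x, y} : Set G))) :
    ∃ w : (Delta G A).Walk (vtx A x hx) (vtx A y hy), w.length ≤ 1 := by
  by_cases h : vtx A x hx = vtx A y hy
  · exact ⟨Walk.nil.copy rfl h, by simp⟩
  · exact ⟨Walk.cons ⟨h, x, ⟨1, A.one_mem, rfl⟩, y, ⟨1, A.one_mem, rfl⟩, hc⟩ Walk.nil, le_rfl⟩

lemma exists_walk_length_le_one_of_commute_of_prime_ne {x y : G} (hxy : Commute x y)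
    (hx : (orderOf x).Prime) (hy : (orderOf y).Prime) (hne : orderOf x ≠ orderOf y) :
    ∃ w : (Delta G A).Walk (vtx A x (ne_one_of_prime_orderOf hx))
      (vtx A y (ne_one_of_prime_orderOf hy)), w.length ≤ 1 :=
  exists_walk_length_le_one A _ _ <|
    hxy.isCyclic_closure_pair_of_coprime ((Nat.coprime_primes hx hy).mpr hne)

variable [Finite G] {z : G} (hzc : z ∈ center G) (hzp : (orderOf z).Prime)
  (hcent : ∀ x : G, orderOf x = orderOf z → ¬IsPGroup (orderOf z) (centralizer {x}))
include hzc hzp hcent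

lemma exists_walk_length_le_two_of_prime_orderOf {x : G} (hx : (orderOf x).Prime) :
    ∃ w : (Delta G A).Walk (vtx A x (ne_one_of_prime_orderOf hx))
      (vtx A z (ne_one_of_prime_orderOf hzp)), w.length ≤ 2 := by
  by_cases hxz : orderOf x = orderOf z
  · obtain ⟨⟨y, hy⟩, hyp, hyz⟩ := exists_prime_orderOf_ne_of_not_isPGroup (hcent x hxz)
    rw [orderOf_mk] at hyp hyz
    obtain ⟨w₁, hw₁⟩ := exists_walk_length_le_one_of_commute_of_prime_ne A
      (mem_centralizer_singleton_iff.mp hy).symm hx hyp (hxz ▸ hyz.symm)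
    obtain ⟨w₂, hw₂⟩ := exists_walk_length_le_one_of_commute_of_prime_ne A
      (mem_center_iff.mp hzc y) hyp hzp hyz
    exact ⟨w₁.append w₂, by rw [Walk.length_append]; omega⟩
  · obtain ⟨w, hw⟩ := exists_walk_length_le_one_of_commute_of_prime_ne A
      (mem_center_iff.mp hzc x) hx hzp hxz
    exact ⟨w, hw.trans (by norm_num)⟩

lemma exists_walk_length_le_three {x : G} (hx : x ≠ 1) :
    ∃ w : (Delta G A).Walk (vtx A x hx)
      (vtx A z (ne_one_of_prime_orderOf hzp)), w.length ≤ 3 := by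
  obtain ⟨k, hk⟩ := exists_prime_orderOf_pow (isOfFinOrder_of_finite x) hx
  obtain ⟨w₁, hw₁⟩ := exists_walk_length_le_one A hx _ <|
    isCyclic_closure_pair_of_mem_zpowers (mem_zpowers x) (pow_mem (mem_zpowers x) k)
  obtain ⟨w₂, hw₂⟩ := exists_walk_length_le_two_of_prime_orderOf A hzc hzp hcent hk
  exact ⟨w₁.append w₂, by rw [Walk.length_append]; omega⟩

end Delta

theorem stmt8 {G : Type*} [Group G] [Finite G] (A : Subgroup (MulAut G))
    (p : ℕ) (hp : p.Prime) (hZ : IsPGroup p (Subgroup.center G))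
    (hZnt : Nontrivial (Subgroup.center G))
    (hcent : ∀ x : G, orderOf x = p → ¬ IsPGroup p (Subgroup.centralizer {x})) :
    (Delta G A).Connected ∧ ∀ u v : DeltaVerts G A, (Delta G A).dist u v ≤ 6 := by
  have := Fact.mk hp
  obtain ⟨⟨z, hzc⟩, hzp⟩ := hZ.exists_orderOf_eq_prime
  rw [orderOf_mk] at hzp
  subst hzp
  refine (Delta G A).connected_and_dist_le_of_forall_walk_length_le
    (vtx A z (ne_one_of_prime_orderOf hp)) 3 ?_
  rintro ⟨_, x, hx, rfl⟩
  exact Delta.exists_walk_length_le_three A hzc hp hcent hx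
end

section
/- Let G be a finite group and let 1 ≠ x ∈ K(G), i.e., ⟨x,g⟩ is cyclic for all g ∈ G. Then for any A ≤ Aut(G), x^A is a universal vertex of Δ(G,A), and ⟨x⟩ is the unique subgroup of G of order equal to the order of x. -/
open Subgroup

/-! Every subgroup H with |H| = o(x) lies in ⟨x⟩: for g ∈ H the group ⟨x, g⟩ is cyclic and
o(g) divides o(x), while a finite cyclic group has at most o(x) solutions of c ^ o(x) = 1,
all of which ⟨x⟩ already supplies. The universal-vertex claim is immediate, since x and any
representative of another orbit generate a cyclic group. -/

theorem mem_self_aorb {G : Type*} [Group G] (A : Subgroup (MulAut G)) (x : G) : x ∈ aorb A x :=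
  ⟨1, A.one_mem, rfl⟩

theorem Delta.adj_vtx_of_forall_isCyclic {G : Type*} [Group G] (A : Subgroup (MulAut G))
    {x : G} (hx : x ≠ 1) (hK : ∀ g : G, IsCyclic (closure {x, g} : Subgroup G))
    (T : DeltaVerts G A) (hT : T ≠ vtx A x hx) : (Delta G A).Adj (vtx A x hx) T := by
  refine ⟨Ne.symm hT, x, mem_self_aorb A x, ?_⟩
  obtain ⟨S, y, -, rfl⟩ := T
  exact ⟨y, mem_self_aorb A y, hK y⟩

theorem IsCyclic.mem_zpowers_of_pow_orderOf_eq_one {α : Type*} [Group α] [Finite α] [IsCyclic α]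
    {a b : α} (hb : b ^ orderOf a = 1) : b ∈ zpowers a := by
  classical
  have := Fintype.ofFinite α
  let roots : Finset α := {c | c ^ orderOf a = 1}
  have hsub : (zpowers a : Set α).toFinset ⊆ roots := fun c hc => by
    simpa [roots, orderOf_dvd_iff_pow_eq_one] using
      orderOf_dvd_of_mem_zpowers (Set.mem_toFinset.1 hc)
  have hcard : roots.card ≤ (zpowers a : Set α).toFinset.card := by
    simpa [← Nat.card_eq_fintype_card] using IsCyclic.card_pow_eq_one_le (orderOf_pos a)
  have hb' : b ∈ roots := by simpa [roots] using hb
  exact Set.mem_toFinset.1 (Finset.eq_of_subset_of_card_le hsub hcard ▸ hb')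

theorem mem_zpowers_of_isCyclic_closure_pair {G : Type*} [Group G] [Finite G] {x g : G}
    (hc : IsCyclic (closure {x, g} : Subgroup G)) (hdvd : orderOf g ∣ orderOf x) :
    g ∈ zpowers x := by
  have hxC : x ∈ closure {x, g} := subset_closure (by simp)
  have hgC : g ∈ closure {x, g} := subset_closure (by simp)
  have hpow : (⟨g, hgC⟩ : closure {x, g}) ^ orderOf (⟨x, hxC⟩ : closure {x, g}) = 1 := by
    ext
    simpa [Subgroup.orderOf_mk] using orderOf_dvd_iff_pow_eq_one.mp hdvd
  obtain ⟨k, hk⟩ := IsCyclic.mem_zpowers_of_pow_orderOf_eq_one hpow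
  exact ⟨k, congrArg Subtype.val hk⟩

theorem eq_zpowers_of_card_eq_orderOf {G : Type*} [Group G] [Finite G] {x : G}
    (hK : ∀ g : G, IsCyclic (closure {x, g} : Subgroup G)) {H : Subgroup G}
    (hH : Nat.card H = orderOf x) : H = zpowers x := by
  have hle : H ≤ zpowers x := fun g hg =>
    mem_zpowers_of_isCyclic_closure_pair (hK g) (hH ▸ Subgroup.orderOf_dvd_natCard H hg)
  exact eq_of_le_of_card_ge hle (by rw [hH, Nat.card_zpowers])

theorem stmt12 {G : Type*} [Group G] [Finite G] (A : Subgroup (MulAut G))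
    (x : G) (hx : x ≠ 1)
    (hK : ∀ g : G, IsCyclic (Subgroup.closure {x, g} : Subgroup G)) :
    (∀ T : DeltaVerts G A, T ≠ vtx A x hx → (Delta G A).Adj (vtx A x hx) T) ∧
      ∀ H : Subgroup G, Nat.card H = orderOf x → H = Subgroup.zpowers x :=
  ⟨Delta.adj_vtx_of_forall_isCyclic A hx hK, fun _ => eq_zpowers_of_card_eq_orderOf hK⟩
end

section
/- Let G be a finite group and A ≤ Inn(G) a subgroup of its inner automorphism group. Then Δ(G,A) is a complete graph if and only if G is cyclic. -/
open Subgroup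

/-!
If `G` is cyclic, every subgroup `⟨x, y⟩` is cyclic, so `Δ(G,A)` is complete. Conversely, let `x`
have maximal order in `G`. A cyclic subgroup containing an element of maximal order is generated
by it, so completeness of `Δ(G,A)` together with `A ≤ Inn(G)` puts a conjugate of every element
into `⟨x⟩`. A proper subgroup of a finite group never meets every conjugacy class (its conjugates
number at most its index and share the identity), hence `⟨x⟩ = G`.
-/

theorem Subgroup.eq_top_of_forall_exists_conj_mem {G : Type*} [Group G] [Finite G]
    (H : Subgroup G) (hcov : ∀ g : G, ∃ c : G, c * g * c⁻¹ ∈ H) : H = ⊤ := by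
  have := Fintype.ofFinite (G ⧸ H)
  set T : G ⧸ H → Set G := fun q => MulAut.conj q.out '' ((H : Set G) \ {1})
  have hT : ∀ q, (T q).ncard = Nat.card H - 1 := fun q => by
    rw [Set.ncard_image_of_injective _ (MulAut.conj _).injective,
      Set.ncard_sdiff_singleton_of_mem H.one_mem, ← Nat.card_coe_set_eq]
    rfl
  have hsub : ({1}ᶜ : Set G) ⊆ ⋃ q, T q := by
    intro g hg
    obtain ⟨c, hc⟩ := hcov g
    obtain ⟨h, hh⟩ := QuotientGroup.mk_out_eq_mul H c⁻¹
    refine Set.mem_iUnion.mpr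
      ⟨(c⁻¹ : G), (h : G)⁻¹ * (c * g * c⁻¹) * h, ⟨?_, fun hw => hg ?_⟩, ?_⟩
    · exact H.mul_mem (H.mul_mem (H.inv_mem h.2) hc) h.2
    · calc g = (c⁻¹ * h) * ((h : G)⁻¹ * (c * g * c⁻¹) * h) * (c⁻¹ * h)⁻¹ := by group
        _ = 1 := by rw [Set.mem_singleton_iff.mp hw]; group
    · rw [hh, MulAut.conj_apply]; group
  have hcount : Nat.card G - 1 ≤ H.index * (Nat.card H - 1) :=
    calc Nat.card G - 1 = ({1}ᶜ : Set G).ncard := by rw [Set.ncard_compl, Set.ncard_singleton]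
      _ ≤ (⋃ q, T q).ncard := Set.ncard_le_ncard hsub
      _ ≤ ∑ q, (T q).ncard := Set.ncard_iUnion_le_of_fintype T
      _ = H.index * (Nat.card H - 1) := by
        simp only [hT, Finset.sum_const, Finset.card_univ, smul_eq_mul, index,
          Nat.card_eq_fintype_card]
  rw [← H.card_mul_index, Nat.mul_sub_one, Nat.mul_comm (Nat.card H)] at hcount
  have hk : H.index ≠ 0 := H.index_ne_zero_of_finite
  have hkm : H.index ≤ H.index * Nat.card H := Nat.le_mul_of_pos_right _ Nat.card_pos
  rw [← index_eq_one]
  omega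

theorem Subgroup.zpowers_eq_of_isCyclic_of_forall_orderOf_le {G : Type*} [Group G] [Finite G]
    (K : Subgroup G) [IsCyclic K] {x : G} (hx : x ∈ K)
    (hmax : ∀ g ∈ K, orderOf g ≤ orderOf x) : zpowers x = K := by
  obtain ⟨z, rfl⟩ := K.isCyclic_iff_exists_zpowers_eq_top.mp ‹_›
  refine eq_of_le_of_card_ge (zpowers_le.mpr hx) ?_
  rw [Nat.card_zpowers, Nat.card_zpowers]
  exact hmax z (mem_zpowers z)

section Orbits

variable {G : Type*} [Group G] {A : Subgroup (MulAut G)}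

theorem orderOf_eq_of_mem_aorb {x y : G} (hy : y ∈ aorb A x) : orderOf y = orderOf x := by
  obtain ⟨a, -, rfl⟩ := hy
  exact a.orderOf_eq x

theorem exists_conj_eq_of_mem_aorb (hA : A ≤ (MulAut.conj : G →* MulAut G).range) {x y : G}
    (hy : y ∈ aorb A x) : ∃ c : G, c * x * c⁻¹ = y := by
  obtain ⟨a, ha, rfl⟩ := hy
  obtain ⟨c, rfl⟩ := hA ha
  exact ⟨c, (MulAut.conj_apply c x).symm⟩

end Orbits

section Graph

variable {G : Type*} [Group G] {A : Subgroup (MulAut G)}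

theorem Delta_adj_of_isCyclic [IsCyclic G] {u v : DeltaVerts G A} (huv : u ≠ v) :
    (Delta G A).Adj u v := by
  obtain ⟨x, -, hu⟩ := u.2
  obtain ⟨y, -, hv⟩ := v.2
  exact ⟨huv, x, hu ▸ mem_aorb_self A x, y, hv ▸ mem_aorb_self A y, inferInstance⟩

variable [Finite G]

theorem exists_mem_zpowers_of_forall_adj
    (hcomplete : ∀ u v : DeltaVerts G A, u ≠ v → (Delta G A).Adj u v) {x g : G}
    (hmax : ∀ h : G, orderOf h ≤ orderOf x) (hg : g ≠ 1) :
    ∃ x' ∈ aorb A x, ∃ y ∈ aorb A g, y ∈ zpowers x' := by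
  have hx : x ≠ 1 := by
    rintro rfl
    exact hg (orderOf_eq_one_iff.mp
      (le_antisymm (orderOf_one (G := G) ▸ hmax g) (orderOf_pos g)))
  by_cases horb : aorb A x = aorb A g
  · exact ⟨g, horb ▸ mem_aorb_self A g, g, mem_aorb_self A g, mem_zpowers g⟩
  obtain ⟨-, x', hx', y, hy, hcyc⟩ :=
    hcomplete (vtx A x hx) (vtx A g hg) fun h => horb (congrArg Subtype.val h)
  refine ⟨x', hx', y, hy, ?_⟩
  rw [(closure {x', y}).zpowers_eq_of_isCyclic_of_forall_orderOf_le (subset_closure (by simp))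
    fun h _ => orderOf_eq_of_mem_aorb hx' ▸ hmax h]
  exact subset_closure (by simp)

theorem isCyclic_of_forall_Delta_adj (hA : A ≤ (MulAut.conj : G →* MulAut G).range)
    (hcomplete : ∀ u v : DeltaVerts G A, u ≠ v → (Delta G A).Adj u v) : IsCyclic G := by
  obtain ⟨x, hmax⟩ := Finite.exists_max (orderOf : G → ℕ)
  refine isCyclic_iff_exists_zpowers_eq_top.mpr
    ⟨x, (zpowers x).eq_top_of_forall_exists_conj_mem fun g => ?_⟩
  by_cases hg : g = 1
  · exact ⟨1, by simp [hg]⟩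
  obtain ⟨x', hx', y, hy, hyx⟩ := exists_mem_zpowers_of_forall_adj hcomplete hmax hg
  obtain ⟨c, rfl⟩ := exists_conj_eq_of_mem_aorb hA hx'
  obtain ⟨d, rfl⟩ := exists_conj_eq_of_mem_aorb hA hy
  obtain ⟨k, hk⟩ := mem_zpowers_iff.mp hyx
  refine ⟨c⁻¹ * d, mem_zpowers_iff.mpr ⟨k, ?_⟩⟩
  rw [conj_zpow] at hk
  calc x ^ k = c⁻¹ * (c * x ^ k * c⁻¹) * c := by group
    _ = c⁻¹ * d * g * (c⁻¹ * d)⁻¹ := by rw [hk]; group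

end Graph

theorem stmt15 {G : Type*} [Group G] [Finite G] (A : Subgroup (MulAut G))
    (hA : A ≤ (MulAut.conj : G →* MulAut G).range) :
    (∀ u v : DeltaVerts G A, u ≠ v → (Delta G A).Adj u v) ↔ IsCyclic G :=
  ⟨isCyclic_of_forall_Delta_adj hA, fun _ _ _ => Delta_adj_of_isCyclic⟩
end
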